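/- Let B > 0 and 0 < ξ < 1/B be real numbers, let M be a submartingale in an imprecise probability tree with |ΔM(s)(x)| ≤ B for all situations s and all successor values x, and let φ be a real process taking values only in {0,1}. Define the real process F by F(□) := 1 and F(x_{1:n}) := ∏_{k=0}^{n−1} (1 − ξ φ(x_{1:k}) ΔM(x_{1:k})(x_{k+1})). Then F is a positive supermartingale with F(□) = 1 (hence a test supermartingale). Moreover, if 0 < ε < B and ξ = ε/(2B²), then for every n ∈ ℕ ∪ {0} and every situation x_{1:n}: M^φ(x_{1:n}) ≤ −ε implies F(x_{1:n}) ≥ exp((∑_{k=0}^{n−1} φ(x_{1:k})) · ε²/(4B²)). -/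
import Mathlib


open Filter Topology

namespace IP

/-- A situation of length `n`: a tuple of the first `n` states. -/
abbrev Sit (𝒳 : ℕ → Type) (n : ℕ) := (i : Fin n) → 𝒳 i

/-- A path: an infinite sequence of states. -/
abbrev Path (𝒳 : ℕ → Type) := (i : ℕ) → 𝒳 i

/-- The initial segment `ω^n` of a path. -/
def res {𝒳 : ℕ → Type} (ω : Path 𝒳) (n : ℕ) : Sit 𝒳 n := fun i => ω i

/-- The initial (empty) situation `□`. -/
def emptySit {𝒳 : ℕ → Type} : Sit 𝒳 0 := fun i => i.elim0

/-- Append a next state to a situation. -/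
def snoc {𝒳 : ℕ → Type} {n : ℕ} (s : Sit 𝒳 n) (x : 𝒳 n) : Sit 𝒳 (n + 1) := fun i =>
  if h : (i : ℕ) < n then s ⟨i, h⟩
  else cast (congrArg 𝒳 (Nat.le_antisymm (Nat.le_of_not_lt h) (Nat.lt_succ_iff.mp i.isLt))) x

/-- Truncate a situation of length `n` to its first `k` states. -/
def trunc {𝒳 : ℕ → Type} {n : ℕ} (s : Sit 𝒳 n) (k : ℕ) (h : k ≤ n) : Sit 𝒳 k :=
  fun i => s ⟨i, lt_of_lt_of_le i.isLt h⟩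

/-- A (coherent) lower expectation on a nonempty finite set. -/
def IsLE {Y : Type} [Fintype Y] [Nonempty Y] (E : (Y → ℝ) → ℝ) : Prop :=
  (∀ f : Y → ℝ, (⨅ y, f y) ≤ E f) ∧
  (∀ f g : Y → ℝ, E f + E g ≤ E (fun y => f y + g y)) ∧
  (∀ (f : Y → ℝ) (c : ℝ), 0 ≤ c → E (fun y => c * f y) = c * E f)

/-- Submartingale w.r.t. the local models `Q` of an imprecise probability tree. -/
def IsSubmartingale {𝒳 : ℕ → Type} (Q : ∀ n, Sit 𝒳 n → (𝒳 n → ℝ) → ℝ)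
    (F : ∀ n, Sit 𝒳 n → ℝ) : Prop :=
  ∀ (n : ℕ) (s : Sit 𝒳 n), 0 ≤ Q n s (fun x => F (n + 1) (snoc s x) - F n s)

/-- Supermartingale: `-F` is a submartingale. -/
def IsSupermartingale {𝒳 : ℕ → Type} (Q : ∀ n, Sit 𝒳 n → (𝒳 n → ℝ) → ℝ)
    (F : ∀ n, Sit 𝒳 n → ℝ) : Prop :=
  IsSubmartingale Q (fun n s => -F n s)

/-- A test supermartingale: nonnegative, starting at 1. -/
def IsTestSupermartingale {𝒳 : ℕ → Type} (Q : ∀ n, Sit 𝒳 n → (𝒳 n → ℝ) → ℝ)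
    (F : ∀ n, Sit 𝒳 n → ℝ) : Prop :=
  IsSupermartingale Q F ∧ (∀ n s, 0 ≤ F n s) ∧ F 0 emptySit = 1

/-- An event is strictly null if some test supermartingale converges to `+∞` on it. -/
def StrictlyNull {𝒳 : ℕ → Type} (Q : ∀ n, Sit 𝒳 n → (𝒳 n → ℝ) → ℝ)
    (A : Set (Path 𝒳)) : Prop :=
  ∃ F : ∀ n, Sit 𝒳 n → ℝ, IsTestSupermartingale Q F ∧
    ∀ ω ∈ A, Tendsto (fun n => F n (res ω n)) atTop atTop

/-- `limsup_n F(ω^n)` as an extended real. -/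
noncomputable def pathLimsup {𝒳 : ℕ → Type} (F : ∀ n, Sit 𝒳 n → ℝ) (ω : Path 𝒳) : EReal :=
  Filter.limsup (fun n => (F n (res ω n) : EReal)) atTop

/-- `liminf_n F(ω^n)` as an extended real. -/
noncomputable def pathLiminf {𝒳 : ℕ → Type} (F : ∀ n, Sit 𝒳 n → ℝ) (ω : Path 𝒳) : EReal :=
  Filter.liminf (fun n => (F n (res ω n) : EReal)) atTop

/-- A real process bounded above. -/
def BddAbv {𝒳 : ℕ → Type} (F : ∀ n, Sit 𝒳 n → ℝ) : Prop := ∃ B : ℝ, ∀ n s, F n s ≤ B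

/-- A real process bounded below. -/
def BddBlw {𝒳 : ℕ → Type} (F : ∀ n, Sit 𝒳 n → ℝ) : Prop := ∃ B : ℝ, ∀ n s, B ≤ F n s

/-- Conditional global lower expectation `E(f|s)` of an extended real variable. -/
noncomputable def lexp {𝒳 : ℕ → Type} (Q : ∀ n, Sit 𝒳 n → (𝒳 n → ℝ) → ℝ) {n : ℕ}
    (s : Sit 𝒳 n) (f : Path 𝒳 → EReal) : EReal :=
  sSup ((fun F : ∀ k, Sit 𝒳 k → ℝ => (F n s : EReal)) ''
    {F : ∀ k, Sit 𝒳 k → ℝ | IsSubmartingale Q F ∧ BddAbv F ∧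
      ∀ ω : Path 𝒳, res ω n = s → pathLimsup F ω ≤ f ω})

/-- Conditional global upper expectation `Ē(f|s)`. -/
noncomputable def uexp {𝒳 : ℕ → Type} (Q : ∀ n, Sit 𝒳 n → (𝒳 n → ℝ) → ℝ) {n : ℕ}
    (s : Sit 𝒳 n) (f : Path 𝒳 → EReal) : EReal :=
  - lexp Q s (fun ω => - f ω)

/-- The local models of a (time-homogeneous) imprecise Markov chain with initial model `E1`
and transition models `QT`. -/
def markovQ {X : Type} (E1 : (X → ℝ) → ℝ) (QT : X → (X → ℝ) → ℝ) :
    ∀ n, Sit (fun _ => X) n → (X → ℝ) → ℝ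
  | 0, _ => E1
  | n + 1, s => QT (s ⟨n, Nat.lt_succ_self n⟩)

/-- Prefix a path with a situation (fixed state space). -/
def prependX {X : Type} {n : ℕ} (s : Sit (fun _ => X) n) (ω : ℕ → X) : ℕ → X :=
  fun i => if h : i < n then s ⟨i, h⟩ else ω (i - n)

/-- Extension of a lower transition operator to extended real maps. -/
noncomputable def Text {X : Type} (T : (X → ℝ) → X → ℝ) (g : X → EReal) : X → EReal :=
  fun x => sSup ((fun h : X → ℝ => (T h x : EReal)) '' {h : X → ℝ | ∀ y, (h y : EReal) ≤ g y})

/-- The variation (semi)norm `max h - min h`. -/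
noncomputable def varnorm {X : Type} [Fintype X] [Nonempty X] (h : X → ℝ) : ℝ :=
  (⨆ x, h x) - ⨅ x, h x

/-- The (weak) coefficient of ergodicity of a lower transition operator. -/
noncomputable def coeff {X : Type} [Fintype X] [Nonempty X] (S : (X → ℝ) → X → ℝ) : ℝ :=
  sSup {v : ℝ | ∃ h : X → ℝ, (∀ x, 0 ≤ h x ∧ h x ≤ 1) ∧ v = varnorm (S h)}

/-- Extend a situation to a path, arbitrarily. -/
noncomputable def extend {𝒳 : ℕ → Type} [∀ k, Nonempty (𝒳 k)] {n : ℕ} (t : Sit 𝒳 n) :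
    Path 𝒳 :=
  fun i => if h : i < n then t ⟨i, h⟩ else Classical.arbitrary (𝒳 i)


lemma trunc_snoc' {𝒳 : ℕ → Type} {n : ℕ} (s : Sit 𝒳 n) (x : 𝒳 n) (k : ℕ) (h : k ≤ n)
    (h' : k ≤ n + 1) : trunc (snoc s x) k h' = trunc s k h := by
  funext i
  have hi : (i : ℕ) < n := lt_of_lt_of_le i.isLt h
  simp [trunc, snoc, hi]

lemma trunc_succ' {𝒳 : ℕ → Type} {n : ℕ} (s : Sit 𝒳 n) (k : ℕ) (h : k + 1 ≤ n) :
    trunc s (k + 1) h = snoc (trunc s k (Nat.le_of_lt h)) (s ⟨k, h⟩) := by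
  funext i
  rcases i with ⟨iv, hiv⟩
  by_cases hik : iv < k
  · simp [trunc, snoc, hik]
  · have hvk : iv = k := Nat.le_antisymm (Nat.lt_succ_iff.mp hiv) (Nat.le_of_not_lt hik)
    subst hvk
    simp [trunc, snoc, hik]

lemma exp_quad' {t : ℝ} (ht : |t| ≤ 1/2) : Real.exp (t - t^2) ≤ 1 + t := by
  rw [abs_le] at ht
  obtain ⟨h1, h2⟩ := ht
  rcases le_or_gt 0 t with h0 | h0
  · have hpos : 0 < 1 - (t - t^2) := by nlinarith
    have hE : 1 - (t - t^2) ≤ Real.exp (-(t - t^2)) := by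
      have := Real.add_one_le_exp (-(t - t^2)); linarith
    have hmul : Real.exp (t - t^2) * (1 - (t - t^2)) ≤ 1 := by
      calc Real.exp (t - t^2) * (1 - (t - t^2))
          ≤ Real.exp (t - t^2) * Real.exp (-(t - t^2)) :=
            mul_le_mul_of_nonneg_left hE (Real.exp_nonneg _)
        _ = 1 := by rw [← Real.exp_add]; simp
    have h3 : 1 ≤ (1 + t) * (1 - (t - t^2)) := by nlinarith
    nlinarith [Real.exp_pos (t - t^2)]
  · set u := -t with hu
    have hu0 : 0 < u := by simp [hu]; linarith
    have hu2 : u ≤ 1/2 := by simp [hu]; linarith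
    have hq : 1 + (u + u^2) + (u + u^2)^2/2 ≤ Real.exp (u + u^2) :=
      Real.quadratic_le_exp_of_nonneg (by positivity)
    have hkey : 1 ≤ (1 - u) * Real.exp (u + u^2) := by nlinarith
    have hmul : Real.exp (t - t^2) * Real.exp (u + u^2) = 1 := by
      have h0' : t - t^2 + (u + u^2) = 0 := by rw [hu]; ring
      rw [← Real.exp_add, h0', Real.exp_zero]
    nlinarith [Real.exp_pos (u + u^2), Real.exp_pos (t - t^2)]

lemma main_bound (n : ℕ) (B ξ ε : ℝ) (hB0 : 0 < B) (hε0 : 0 < ε) (hεB : ε < B)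
    (hξeq : ξ = ε / (2 * B ^ 2)) (a d : Fin n → ℝ) (ha : ∀ k, a k = 0 ∨ a k = 1)
    (hd : ∀ k, |d k| ≤ B) (hS : 0 < ∑ k, a k)
    (hT : ∑ k, a k * d k ≤ -ε * ∑ k, a k) :
    Real.exp ((∑ k, a k) * ε ^ 2 / (4 * B ^ 2)) ≤ ∏ k, (1 - ξ * a k * d k) := by
  have hξ0 : 0 < ξ := by rw [hξeq]; positivity
  have ht2 : ∀ k, |(-(ξ * a k * d k))| ≤ 1/2 := by
    intro k
    rcases ha k with h | h
    · rw [h]; norm_num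
    · rw [h, mul_one, abs_neg, abs_mul, abs_of_nonneg hξ0.le]
      calc ξ * |d k| ≤ ξ * B := mul_le_mul_of_nonneg_left (hd k) hξ0.le
        _ ≤ 1/2 := by
          rw [hξeq]
          rw [div_mul_eq_mul_div, div_le_iff₀ (by positivity)]
          nlinarith
  have hterm : ∀ k, -(ξ * a k * d k) - ξ^2 * B^2 * a k
      ≤ (-(ξ * a k * d k)) - (-(ξ * a k * d k))^2 := by
    intro k
    rcases ha k with h | h
    · rw [h]; ring_nf; nlinarith [sq_nonneg ξ, sq_nonneg B]
    · rw [h]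
      have h1 := abs_le.mp (hd k)
      have hd2 : d k ^ 2 ≤ B ^ 2 := sq_le_sq' h1.1 h1.2
      nlinarith [mul_le_mul_of_nonneg_left hd2 (sq_nonneg ξ)]
  have hsum1 : ∑ k, (-(ξ * a k * d k) - ξ^2 * B^2 * a k)
      ≤ ∑ k, ((-(ξ * a k * d k)) - (-(ξ * a k * d k))^2) :=
    Finset.sum_le_sum fun k _ => hterm k
  have hsum2 : ∑ k, (-(ξ * a k * d k) - ξ^2 * B^2 * a k)
      = (-ξ) * (∑ k, a k * d k) + (-(ξ^2 * B^2)) * (∑ k, a k) := by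
    rw [Finset.mul_sum, Finset.mul_sum, ← Finset.sum_add_distrib]
    exact Finset.sum_congr rfl fun k _ => by ring
  have hx : ξ * (∑ k, a k * d k) ≤ ξ * (-ε * ∑ k, a k) :=
    mul_le_mul_of_nonneg_left hT hξ0.le
  have key : (∑ k, a k) * ε ^ 2 / (4 * B ^ 2)
      = ξ * ε * (∑ k, a k) - ξ^2 * B^2 * (∑ k, a k) := by
    rw [hξeq]; field_simp; ring
  have h9 : ξ * (∑ k, a k * d k) ≤ -(ξ * ε * (∑ k, a k)) := by
    have hr : ξ * (-ε * ∑ k, a k) = -(ξ * ε * (∑ k, a k)) := by ring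
    linarith [hx]
  have hfinal : (∑ k, a k) * ε ^ 2 / (4 * B ^ 2)
      ≤ ∑ k, ((-(ξ * a k * d k)) - (-(ξ * a k * d k))^2) := by
    rw [hsum2] at hsum1
    rw [key]
    linarith [hsum1, h9]
  calc Real.exp ((∑ k, a k) * ε ^ 2 / (4 * B ^ 2))
      ≤ Real.exp (∑ k, ((-(ξ * a k * d k)) - (-(ξ * a k * d k))^2)) :=
        Real.exp_le_exp.mpr hfinal
    _ = ∏ k, Real.exp ((-(ξ * a k * d k)) - (-(ξ * a k * d k))^2) := Real.exp_sum _ _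
    _ ≤ ∏ k, (1 - ξ * a k * d k) := by
        refine Finset.prod_le_prod (fun k _ => (Real.exp_pos _).le) (fun k _ => ?_)
        have h := exp_quad' (ht2 k)
        calc Real.exp ((-(ξ * a k * d k)) - (-(ξ * a k * d k))^2)
            ≤ 1 + (-(ξ * a k * d k)) := h
          _ = 1 - ξ * a k * d k := by ring

/-- The multiplicative process built from a uniformly bounded submartingale and a 0-1
selection process is a test supermartingale, with an exponential lower bound. -/
theorem test_supermartingale_construction {𝒳 : ℕ → Type}
    [∀ n, Fintype (𝒳 n)] [∀ n, Nonempty (𝒳 n)]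
    (Q : ∀ n, Sit 𝒳 n → (𝒳 n → ℝ) → ℝ) (hQ : ∀ n s, IsLE (Q n s))
    (B ξ : ℝ) (hB0 : 0 < B) (hξ0 : 0 < ξ) (hξB : ξ < 1 / B)
    (M : ∀ n, Sit 𝒳 n → ℝ) (hM : IsSubmartingale Q M)
    (hMB : ∀ (n : ℕ) (s : Sit 𝒳 n) (x : 𝒳 n), |M (n + 1) (snoc s x) - M n s| ≤ B)
    (φ : ∀ n, Sit 𝒳 n → ℝ) (hφ : ∀ n s, φ n s = 0 ∨ φ n s = 1)
    (F : ∀ n, Sit 𝒳 n → ℝ)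
    (hF : ∀ (n : ℕ) (s : Sit 𝒳 n), F n s = ∏ k : Fin n,
      (1 - ξ * φ k.1 (trunc s k.1 (le_of_lt k.isLt)) *
        (M (k.1 + 1) (trunc s (k.1 + 1) k.isLt) - M k.1 (trunc s k.1 (le_of_lt k.isLt))))) :
    ((IsSupermartingale Q F ∧ (∀ n s, 0 < F n s)) ∧ F 0 emptySit = 1)
    ∧ (∀ ε : ℝ, 0 < ε → ε < B → ξ = ε / (2 * B ^ 2) →
        ∀ (n : ℕ) (s : Sit 𝒳 n),
          (if 0 < ∑ k : Fin n, φ k.1 (trunc s k.1 (le_of_lt k.isLt))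
            then (∑ k : Fin n, φ k.1 (trunc s k.1 (le_of_lt k.isLt)) *
                (M (k.1 + 1) (trunc s (k.1 + 1) k.isLt)
                  - M k.1 (trunc s k.1 (le_of_lt k.isLt))))
              / (∑ k : Fin n, φ k.1 (trunc s k.1 (le_of_lt k.isLt)))
            else 0) ≤ -ε →
          Real.exp ((∑ k : Fin n, φ k.1 (trunc s k.1 (le_of_lt k.isLt))) * ε ^ 2 / (4 * B ^ 2))
            ≤ F n s) := by

  -- factor positivity
  have hξB' : ξ * B < 1 := (lt_div_iff₀ hB0).mp hξB
  have hfac : ∀ (m : ℕ) (u : Sit 𝒳 m) (x : 𝒳 m),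
      0 < 1 - ξ * φ m u * (M (m + 1) (snoc u x) - M m u) := by
    intro m u x
    have hd := abs_le.mp (hMB m u x)
    rcases hφ m u with h | h <;> rw [h]
    · simp
    · rw [mul_one]
      nlinarith [hd.1, hd.2]
  have hpos : ∀ (m : ℕ) (u : Sit 𝒳 m), 0 < F m u := by
    intro m u
    rw [hF]
    refine Finset.prod_pos fun k _ => ?_
    rw [trunc_succ' u k.1 k.isLt]
    exact hfac k.1 _ _
  have hstep : ∀ (m : ℕ) (u : Sit 𝒳 m) (x : 𝒳 m),
      F (m + 1) (snoc u x) = F m u * (1 - ξ * φ m u * (M (m + 1) (snoc u x) - M m u)) := by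
    intro m u x
    rw [hF (m + 1), hF m, Fin.prod_univ_castSucc]
    congr 1
    · refine Finset.prod_congr rfl fun k _ => ?_
      simp only [Fin.coe_castSucc]
      rw [trunc_snoc' u x k.1 (le_of_lt k.isLt), trunc_snoc' u x (k.1 + 1) k.isLt]
    · simp only [Fin.val_last]
      rw [trunc_snoc' u x m le_rfl]
      rfl
  have hsuper : IsSupermartingale Q F := by
    intro m u
    have hφ0 : 0 ≤ φ m u := by rcases hφ m u with h | h <;> rw [h] <;> norm_num
    have hc : 0 ≤ F m u * ξ * φ m u :=
      mul_nonneg (mul_nonneg (hpos m u).le hξ0.le) hφ0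
    have heq : (fun x => -F (m + 1) (snoc u x) - -F m u)
        = fun x => (F m u * ξ * φ m u) * (M (m + 1) (snoc u x) - M m u) := by
      funext x; rw [hstep m u x]; ring
    show 0 ≤ Q m u fun x => -F (m + 1) (snoc u x) - -F m u
    rw [heq, (hQ m u).2.2 _ _ hc]
    exact mul_nonneg hc (hM m u)
  have hone : F 0 emptySit = 1 := by
    rw [hF]
    exact Finset.prod_of_isEmpty _
  refine ⟨⟨⟨hsuper, hpos⟩, hone⟩, ?_⟩
  intro ε hε0 hεB hξeq n s hyp
  split_ifs at hyp with hS
  · have hd : ∀ k : Fin n,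
        |M (k.1 + 1) (trunc s (k.1 + 1) k.isLt) - M k.1 (trunc s k.1 (le_of_lt k.isLt))| ≤ B := by
      intro k
      rw [trunc_succ' s k.1 k.isLt]
      exact hMB k.1 _ _
    rw [div_le_iff₀ hS] at hyp
    rw [hF n s]
    exact main_bound n B ξ ε hB0 hε0 hεB hξeq
      (fun k => φ k.1 (trunc s k.1 (le_of_lt k.isLt)))
      (fun k => M (k.1 + 1) (trunc s (k.1 + 1) k.isLt)
        - M k.1 (trunc s k.1 (le_of_lt k.isLt)))
      (fun k => hφ _ _) hd hS (by linarith [hyp])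
  · exfalso; linarith


end IP
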